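/- The complex coefficients α_1 = 1/4 + i√15/12, α_2 = 1/2, α_3 = \bar{α_1} satisfy α_1 + α_2 + α_3 = 1 and α_1^3 + α_2^3 + α_3^3 = 0, and all three have positive real parts. -/
import Mathlib


open Complex

theorem symmetric_conjugate_triple_jump_coefficients
    (α₁ α₂ α₃ : ℂ) (h₁ : α₁ = 1 / 4 + (Real.sqrt 15 / 12 : ℝ) * I)
    (h₂ : α₂ = 1 / 2) (h₃ : α₃ = (starRingEnd ℂ) α₁) :
    α₁ + α₂ + α₃ = 1 ∧ α₁ ^ 3 + α₂ ^ 3 + α₃ ^ 3 = 0 ∧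
      0 < α₁.re ∧ 0 < α₂.re ∧ 0 < α₃.re := by
  have hs : Real.sqrt 15 ^ 2 = 15 := Real.sq_sqrt (by norm_num)
  subst h₁ h₂ h₃
  simp only [map_add, map_mul, Complex.conj_I, Complex.conj_ofReal, map_div₀, map_one,
    map_ofNat]
  refine ⟨?_, ?_, ?_, ?_, ?_⟩
  · apply Complex.ext <;> simp [pow_succ] <;> nlinarith [hs]
  · apply Complex.ext <;> simp [pow_succ] <;> nlinarith [hs]
  · simp
  · norm_num
  · simp
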